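/- arXiv:1803.10123 — 2 statements merged into one kernel-verified Lean document; each statement's English description precedes it below -/
import Mathlib

section
/- Let L : ℝ^d → ℝ be continuously differentiable and m-strongly convex with m > 0. Fix a coordinate i, means μ ∈ ℝ^d and standard deviations σ ∈ ℝ^d with σ_i > 0. Let ε ∈ ℝ^d be a standard Gaussian vector, and set θ_j = μ_j + ε_j σ_j. Then E[∂L/∂θ_i(θ) · ε_i] ≥ m σ_i > 0. -/
open MeasureTheory ProbabilityTheory Real Filter
open scoped NNReal ENNReal

lemma integrable_sq_exp : Integrable (fun x : ℝ => x ^ 2 * Real.exp (-(1/2) * x ^ 2)) := by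
  have := integrable_rpow_mul_exp_neg_mul_sq (b := 1/2) (by norm_num) (s := 2) (by norm_num)
  simpa [Real.rpow_two] using this

lemma moment2 : ∫ x : ℝ, x ^ 2 * Real.exp (-(1/2) * x ^ 2) = Real.sqrt (2 * Real.pi) := by
  have hderiv : ∀ x : ℝ, HasDerivAt (fun x : ℝ => -(x * Real.exp (-(1/2) * x ^ 2)))
      (x ^ 2 * Real.exp (-(1/2) * x ^ 2) - Real.exp (-(1/2) * x ^ 2)) x := by
    intro x
    have h1 : HasDerivAt (fun x : ℝ => -(1/2) * x ^ 2) (-(1/2) * (2 * x)) x := by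
      simpa using (hasDerivAt_pow 2 x).const_mul (-(1/2 : ℝ))
    have h2 := (h1.exp).const_mul x
    have h3 := ((hasDerivAt_id x).mul h1.exp)
    have := h3.neg
    convert this using 1
    · rfl
    · rfl
    · funext y; simp
    · simp only [id]
      ring
  have hint' : Integrable (fun x : ℝ =>
      x ^ 2 * Real.exp (-(1/2) * x ^ 2) - Real.exp (-(1/2) * x ^ 2)) :=
    integrable_sq_exp.sub (integrable_exp_neg_mul_sq (by norm_num))
  have htends : ∀ (l : Filter ℝ), l ≤ Filter.cocompact ℝ →
      Tendsto (fun x : ℝ => -(x * Real.exp (-(1/2) * x ^ 2))) l (nhds 0) := by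
    intro l hl
    have h0 : Tendsto (fun x : ℝ => |x| ^ (1:ℝ) * Real.exp (-(1/2) * x ^ 2))
        (Filter.cocompact ℝ) (nhds 0) :=
      tendsto_rpow_abs_mul_exp_neg_mul_sq_cocompact (by norm_num) 1
    refine squeeze_zero_norm (fun x => ?_) ((h0.mono_left hl))
    rw [norm_neg, norm_mul, Real.norm_eq_abs, Real.norm_eq_abs,
      abs_of_pos (Real.exp_pos _), Real.rpow_one]
  have key := integral_of_hasDerivAt_of_tendsto hderiv hint'
    (htends _ (by rw [cocompact_eq_atBot_atTop]; exact le_sup_left))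
    (htends _ (by rw [cocompact_eq_atBot_atTop]; exact le_sup_right))
  rw [integral_sub integrable_sq_exp (integrable_exp_neg_mul_sq (by norm_num))] at key
  have hg : ∫ x : ℝ, Real.exp (-(1/2) * x ^ 2) = Real.sqrt (2 * Real.pi) := by
    rw [integral_gaussian]
    norm_num [mul_comm]
  linarith [key, hg]

lemma pdf01 : ∀ x : ℝ, gaussianPDFReal 0 1 x
    = (Real.sqrt (2 * Real.pi))⁻¹ * Real.exp (-(1/2) * x ^ 2) := by
  intro x
  simp only [gaussianPDFReal, NNReal.coe_one, mul_one, sub_zero]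
  congr 1
  ring

lemma gauss_eq_withDensity : gaussianReal 0 1
    = (volume : Measure ℝ).withDensity (fun x => ((gaussianPDFReal 0 1 x).toNNReal : ENNReal)) := by
  rw [gaussianReal_of_var_ne_zero 0 one_ne_zero]
  rfl

lemma smul_eq' (x : ℝ) : ((gaussianPDFReal 0 1 x).toNNReal : ℝ≥0) • (x ^ 2)
    = (Real.sqrt (2 * Real.pi))⁻¹ * (x ^ 2 * Real.exp (-(1/2) * x ^ 2)) := by
  rw [NNReal.smul_def, Real.coe_toNNReal _ (gaussianPDFReal_nonneg 0 1 x), pdf01]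
  rw [smul_eq_mul]
  ring

lemma integrable_sq_gauss : Integrable (fun x : ℝ => x ^ 2) (gaussianReal 0 1) := by
  rw [gauss_eq_withDensity,
    integrable_withDensity_iff_integrable_smul ((measurable_gaussianPDFReal 0 1).real_toNNReal)]
  simp only [smul_eq']
  exact integrable_sq_exp.const_mul _

lemma integral_sq_gauss : ∫ x : ℝ, x ^ 2 ∂(gaussianReal 0 1) = 1 := by
  rw [gauss_eq_withDensity,
    integral_withDensity_eq_integral_smul ((measurable_gaussianPDFReal 0 1).real_toNNReal)]
  simp only [smul_eq']
  rw [integral_const_mul, moment2, inv_mul_cancel₀]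
  positivity

lemma measurePreserving_eval {d : ℕ} (i : Fin d) :
    MeasurePreserving (fun ε : Fin d → ℝ => ε i)
      (Measure.pi fun _ : Fin d => gaussianReal 0 1) (gaussianReal 0 1) := by
  constructor
  · exact measurable_pi_apply i
  · ext s hs
    rw [Measure.map_apply (measurable_pi_apply i) hs]
    have : (fun ε : Fin d → ℝ => ε i) ⁻¹' s
        = Set.pi Set.univ (Function.update (fun _ : Fin d => (Set.univ : Set ℝ)) i s) := by
      ext x
      simp only [Set.mem_preimage, Set.mem_pi, Set.mem_univ, forall_true_left]
      constructor
      · intro hx j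
        rcases eq_or_ne j i with rfl | hj
        · simpa using hx
        · simp [Function.update_of_ne hj]
      · intro h
        simpa using h i
    rw [this, Measure.pi_pi]
    rw [Finset.prod_eq_single i]
    · simp
    · intro j _ hj
      simp [Function.update_of_ne hj]
    · simp

lemma gauss_neg : Measure.map (fun x : ℝ => -x) (gaussianReal 0 1) = gaussianReal 0 1 := by
  have := gaussianReal_map_const_mul (μ := 0) (v := 1) (-1)
  simp only [neg_one_mul, mul_zero] at this
  convert this using 2
  · ext
    simp

lemma measurePreserving_flip {d : ℕ} (i : Fin d) :
    MeasurePreserving (fun (ε : Fin d → ℝ) (j : Fin d) => if j = i then -(ε j) else ε j)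
      (Measure.pi fun _ : Fin d => gaussianReal 0 1)
      (Measure.pi fun _ : Fin d => gaussianReal 0 1) := by
  exact measurePreserving_pi _ _ (f := fun j (x : ℝ) => if j = i then -x else x)
    (fun j => by
      rcases eq_or_ne j i with rfl | hj
      · simpa using (⟨measurable_neg, gauss_neg⟩ : MeasurePreserving (fun x : ℝ => -x) _ _)
      · simp only [hj, if_false]; exact MeasurePreserving.id (gaussianReal 0 1))

/-- Theorem 1 of the paper (Bayesian Gradient Descent): if `L` is continuously
differentiable and `m`-strongly convex (`m > 0`), then with `θ = μ + ε ⊙ σ`,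
`ε` a standard Gaussian vector, and `σ i > 0`, we have
`E[∂L/∂θ_i (θ) · ε_i] ≥ m σ_i > 0`. -/
theorem stmt0 (d : ℕ) (L : (Fin d → ℝ) → ℝ) (m : ℝ) (hm : 0 < m)
    (hL : ContDiff ℝ 1 L)
    (hconv : ∀ x y : Fin d → ℝ,
      (fderiv ℝ L x - fderiv ℝ L y) (x - y) ≥ m * ∑ j, (x j - y j) ^ 2)
    (i : Fin d) (μ σ : Fin d → ℝ) (hσ : 0 < σ i)
    (hint : Integrable
      (fun ε : Fin d → ℝ =>
        fderiv ℝ L (fun j => μ j + ε j * σ j) (Pi.single i 1) * ε i)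
      (Measure.pi fun _ : Fin d => gaussianReal 0 1)) :
    (∫ ε : Fin d → ℝ,
        fderiv ℝ L (fun j => μ j + ε j * σ j) (Pi.single i 1) * ε i
        ∂(Measure.pi fun _ : Fin d => gaussianReal 0 1)) ≥ m * σ i
      ∧ 0 < m * σ i := by
  refine ⟨?_, mul_pos hm hσ⟩
  set Pm : Measure (Fin d → ℝ) := Measure.pi fun _ : Fin d => gaussianReal 0 1 with hPm
  set θ : (Fin d → ℝ) → (Fin d → ℝ) := fun ε j => μ j + ε j * σ j with hθ
  set f : (Fin d → ℝ) → ℝ := fun ε => fderiv ℝ L (θ ε) (Pi.single i 1) with hf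
  set T : (Fin d → ℝ) → (Fin d → ℝ) := fun ε j => if j = i then -(ε j) else ε j with hTdef
  set g : (Fin d → ℝ) → ℝ := fun ε => f ε * ε i with hg
  have hT : MeasurePreserving T Pm Pm := measurePreserving_flip i
  -- continuity facts
  have hθc : Continuous θ :=
    continuous_pi fun j => continuous_const.add ((continuous_apply j).mul continuous_const)
  have hfc : Continuous f :=
    (ContinuousLinearMap.apply ℝ ℝ ((Pi.single i 1 : Fin d → ℝ))).continuous.comp
      ((hL.continuous_fderiv one_ne_zero).comp hθc)
  have hgc : Continuous g := hfc.mul (continuous_apply i)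
  have hgm : AEStronglyMeasurable g Pm := hgc.aestronglyMeasurable
  -- the flipped integrand
  have hTi : ∀ ε : Fin d → ℝ, T ε i = -ε i := fun ε => by simp [hTdef]
  have hgT : (g ∘ T) = fun ε => -(f (T ε) * ε i) := by
    funext ε
    simp only [Function.comp, hg, hTi]
    ring
  have hintT : Integrable (g ∘ T) Pm := (hT.integrable_comp hgm).mpr hint
  have hh2 : Integrable (fun ε => f (T ε) * ε i) Pm := by
    have h4 := hintT
    rw [hgT] at h4
    exact integrable_neg_iff.mp h4
  have hIT : ∫ ε, g (T ε) ∂Pm = ∫ ε, g ε ∂Pm := by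
    have h1 : ∫ x, g x ∂(Measure.map T Pm) = ∫ ε, g (T ε) ∂Pm :=
      integral_map hT.measurable.aemeasurable (by rw [hT.map_eq]; exact hgm)
    rw [hT.map_eq] at h1
    exact h1.symm
  have hIneg : ∫ ε, f (T ε) * ε i ∂Pm = - ∫ ε, g ε ∂Pm := by
    have h2 : ∫ ε, f (T ε) * ε i ∂Pm = - ∫ ε, g (T ε) ∂Pm := by
      rw [← integral_neg]
      refine integral_congr_ae (Filter.Eventually.of_forall fun ε => ?_)
      have h5 := congrFun hgT ε
      simp only [Function.comp] at h5
      show f (T ε) * ε i = -g (T ε)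
      rw [h5]
      ring
    rw [h2, hIT]
  -- pointwise inequality
  have hpt : ∀ ε : Fin d → ℝ, 2 * m * σ i * (ε i) ^ 2 ≤ g ε - f (T ε) * ε i := by
    intro ε
    have hcoord : ∀ j, θ ε j - θ (T ε) j = if j = i then 2 * (ε i * σ i) else 0 := by
      intro j
      rcases eq_or_ne j i with rfl | hj
      · simp [hθ, hTdef]
        ring
      · simp [hθ, hTdef, hj]
    have hxy : θ ε - θ (T ε) = (2 * (ε i * σ i)) • (Pi.single i 1 : Fin d → ℝ) := by
      funext j
      rw [Pi.sub_apply, hcoord, Pi.smul_apply]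
      rcases eq_or_ne j i with rfl | hj
      · rw [if_pos rfl, Pi.single_eq_same, smul_eq_mul, mul_one]
      · rw [if_neg hj, Pi.single_eq_of_ne hj, smul_zero]
    have hsum : ∑ j, (θ ε j - θ (T ε) j) ^ 2 = (2 * (ε i * σ i)) ^ 2 := by
      rw [Finset.sum_eq_single i]
      · rw [hcoord]; simp
      · intro j _ hj
        rw [hcoord]; simp [hj]
      · simp
    have hc := hconv (θ ε) (θ (T ε))
    rw [hxy, hsum, _root_.map_smul, smul_eq_mul, ContinuousLinearMap.sub_apply] at hc
    have hD : fderiv ℝ L (θ ε) (Pi.single i 1) - fderiv ℝ L (θ (T ε)) (Pi.single i 1)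
        = f ε - f (T ε) := rfl
    rw [hD] at hc
    simp only [hg]
    nlinarith [hc, hσ, sq_nonneg (ε i)]
  -- integrability and value of the bound
  have hsqi : Integrable (fun ε : Fin d → ℝ => (ε i) ^ 2) Pm :=
    ((measurePreserving_eval i).integrable_comp
      ((continuous_pow 2).aestronglyMeasurable)).mpr integrable_sq_gauss
  have hbound : Integrable (fun ε : Fin d → ℝ => 2 * m * σ i * (ε i) ^ 2) Pm :=
    hsqi.const_mul _
  have hsqval : ∫ ε, (ε i) ^ 2 ∂Pm = 1 := by
    have h3 : ∫ x : ℝ, x ^ 2 ∂(Measure.map (fun ε : Fin d → ℝ => ε i) Pm)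
        = ∫ ε, (ε i) ^ 2 ∂Pm :=
      integral_map (measurable_pi_apply i).aemeasurable
        (by rw [(measurePreserving_eval i).map_eq]
            exact (continuous_pow 2).aestronglyMeasurable)
    rw [(measurePreserving_eval i).map_eq, integral_sq_gauss] at h3
    exact h3.symm
  have hmono := integral_mono hbound (hint.sub hh2) hpt
  simp only [Pi.sub_apply] at hmono
  rw [integral_sub hint hh2, hIneg, integral_const_mul, hsqval] at hmono
  have : m * σ i ≤ ∫ ε, g ε ∂Pm := by linarith
  exact this
end

section
/- Let f : ℝ → ℝ be continuously differentiable and convex, μ ∈ ℝ, σ > 0, and ε ~ N(0,1). Then E[f'(μ + σε) · ε] ≥ 0. -/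
open MeasureTheory ProbabilityTheory

lemma gaussian_neg_invariant :
    (gaussianReal 0 1).map (fun x : ℝ => -x) = gaussianReal 0 1 := by
  have h := gaussianReal_map_const_mul (μ := 0) (v := 1) (-1)
  simp only [neg_one_mul, neg_zero] at h
  convert h using 2
  ext
  norm_num

/-- For a continuously differentiable convex `f : ℝ → ℝ`, `μ ∈ ℝ`, `σ > 0`, and
`ε ~ N(0,1)`, we have `E[f'(μ + σε) · ε] ≥ 0`. -/
theorem stmt2 (f : ℝ → ℝ) (hf : ContDiff ℝ 1 f)
    (hconv : ConvexOn ℝ Set.univ f) (μ σ : ℝ) (hσ : 0 < σ)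
    (hint : Integrable (fun ε : ℝ => deriv f (μ + σ * ε) * ε) (gaussianReal 0 1)) :
    0 ≤ ∫ ε : ℝ, deriv f (μ + σ * ε) * ε ∂(gaussianReal 0 1) := by
  set γ := gaussianReal 0 1 with hγ
  set g : ℝ → ℝ := fun ε => deriv f (μ + σ * ε) * ε with hg
  have hmono : Monotone (deriv f) := by
    have := hconv.monotoneOn_deriv (fun x _ => (hf.differentiable one_ne_zero).differentiableAt)
    exact monotoneOn_univ.mp this
  have hderivc : Continuous (deriv f) := hf.continuous_deriv le_rfl
  have hgc : Continuous g := by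
    exact (hderivc.comp (continuous_const.add (continuous_const.mul continuous_id))).mul
      continuous_id
  have hmp : MeasurePreserving (fun x : ℝ => -x) γ γ :=
    ⟨measurable_neg, gaussian_neg_invariant⟩
  have hint2 : Integrable (fun x => g (-x)) γ := (hmp.integrable_comp hgc.aestronglyMeasurable).mpr hint
  have h1 : ∫ x, g (-x) ∂γ = ∫ x, g x ∂γ := by
    rw [← integral_map measurable_neg.aemeasurable hgc.aestronglyMeasurable,
      hγ, gaussian_neg_invariant]
  have h2 : ∫ x, (g x + g (-x)) ∂γ = 2 * ∫ x, g x ∂γ := by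
    rw [integral_add hint hint2, h1]; ring
  have hpt : ∀ x, 0 ≤ g x + g (-x) := by
    intro x
    have : g x + g (-x) = (deriv f (μ + σ * x) - deriv f (μ + σ * -x)) * x := by
      simp only [hg]; ring
    rw [this]
    rcases le_total 0 x with hx | hx
    · apply mul_nonneg _ hx
      have : μ + σ * -x ≤ μ + σ * x := by nlinarith
      linarith [hmono this]
    · have h3 : μ + σ * x ≤ μ + σ * -x := by nlinarith
      have := hmono h3
      nlinarith
  have : 0 ≤ ∫ x, (g x + g (-x)) ∂γ := integral_nonneg hpt
  rw [h2] at this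
  linarith
end
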